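/- arXiv:2302.09737 — 10 statements merged into one kernel-verified Lean document; each statement's English description precedes it below -/
import Mathlib

section
/- Let (X,d) be a metric space, let P and C be finite nonempty subsets of X, and let a* ∈ P satisfy d(a*,C) = max_{p∈P} d(p,C). Let r > 0 and γ ≥ 4. Let Z be a finite subset of P containing a point z' with d(z',a*) ≤ 2r, and let Y' be a finite subset of X such that every p ∈ P is within distance r of some point of Y'. Define Z' = { y ∈ Y' : (∃ z ∈ Z with d(y,z) ≤ γ·r) and (for every z ∈ Z, d(y,C) ≥ d(z,C) − r) }. Then there exists y ∈ Z' with d(y,a*) ≤ r. -/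
open Metric

lemma Metric.infDist_sub_le_of_le_infDist_of_dist_le {X : Type*} [PseudoMetricSpace X]
    {s : Set X} {a y z : X} {r : ℝ} (hz : infDist z s ≤ infDist a s) (hy : dist y a ≤ r) :
    infDist z s - r ≤ infDist y s := by
  have hlip : infDist a s ≤ infDist y s + dist a y := infDist_le_infDist_add_dist
  rw [dist_comm] at hlip
  linarith

lemma dist_le_mul_of_dist_le_of_dist_le {X : Type*} [PseudoMetricSpace X] {a y z : X}
    {r γ : ℝ} (hr : 0 ≤ r) (hγ : 3 ≤ γ) (hy : dist y a ≤ r) (hz : dist z a ≤ 2 * r) :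
    dist y z ≤ γ * r :=
  calc dist y z ≤ dist y a + dist z a := dist_triangle_right y z a
    _ ≤ 3 * r := by linarith
    _ ≤ γ * r := by gcongr

theorem stmt_2_general {X : Type*} [MetricSpace X] (P C : Finset X)
    (astar : X) (hastar : astar ∈ P)
    (hfar : ∀ p ∈ P, Metric.infDist p (C : Set X) ≤ Metric.infDist astar (C : Set X))
    (r γ : ℝ) (hr : 0 < r) (hγ : 4 ≤ γ)
    (Z : Finset X) (hZP : Z ⊆ P)
    (z' : X) (hz'Z : z' ∈ Z) (hz' : dist z' astar ≤ 2 * r)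
    (Y' : Finset X) (hY' : ∀ p ∈ P, ∃ y ∈ Y', dist p y ≤ r) :
    ∃ y ∈ Y', ((∃ z ∈ Z, dist y z ≤ γ * r) ∧
      (∀ z ∈ Z, Metric.infDist y (C : Set X) ≥ Metric.infDist z (C : Set X) - r)) ∧
      dist y astar ≤ r := by
  obtain ⟨y, hyY, hay⟩ := hY' astar hastar
  have hya : dist y astar ≤ r := dist_comm astar y ▸ hay
  refine ⟨y, hyY, ⟨⟨z', hz'Z, ?_⟩, fun z hz => ?_⟩, hya⟩
  · exact dist_le_mul_of_dist_le_of_dist_le hr.le (by linarith) hya hz'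
  · exact infDist_sub_le_of_le_infDist_of_dist_le (hfar z (hZP hz)) hya

/-- inductive step of Lemma 3 (AFN candidate sets stay close to the
furthest neighbor). -/
theorem stmt_2 {X : Type*} [MetricSpace X] (P C : Finset X)
    (hP : P.Nonempty) (hC : C.Nonempty)
    (astar : X) (hastar : astar ∈ P)
    (hfar : ∀ p ∈ P, Metric.infDist p (C : Set X) ≤ Metric.infDist astar (C : Set X))
    (r γ : ℝ) (hr : 0 < r) (hγ : 4 ≤ γ)
    (Z : Finset X) (hZP : Z ⊆ P)
    (z' : X) (hz'Z : z' ∈ Z) (hz' : dist z' astar ≤ 2 * r)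
    (Y' : Finset X) (hY' : ∀ p ∈ P, ∃ y ∈ Y', dist p y ≤ r) :
    ∃ y ∈ Y', ((∃ z ∈ Z, dist y z ≤ γ * r) ∧
      (∀ z ∈ Z, Metric.infDist y (C : Set X) ≥ Metric.infDist z (C : Set X) - r)) ∧
      dist y astar ≤ r :=
  stmt_2_general P C astar hastar hfar r γ hr hγ Z hZP z' hz'Z hz' Y' hY'
end

section
/- Let (X,d) be a metric space, let P and C be finite nonempty subsets of X, and let a* ∈ P satisfy d(a*,C) = max_{p∈P} d(p,C). Let γ ≥ 4, R₀ > 0, N ∈ ℕ, and set r_j = R₀/2^j for 0 ≤ j ≤ N. Let Y₀, …, Y_N be finite subsets of P such that: Y₀ = {y₀} where every p ∈ P satisfies d(p,y₀) ≤ 2R₀; and for every 1 ≤ j ≤ N, every p ∈ P is within distance 2·r_j of some point of Y_j. Define Z₀ = Y₀ and, for 0 ≤ j < N, Z_{j+1} = { y ∈ Y_{j+1} : (∃ z ∈ Z_j with d(y,z) ≤ γ·r_j) and (for every z ∈ Z_j, d(y,C) ≥ d(z,C) − r_j) }. Then for every 0 ≤ j ≤ N there exists z ∈ Z_j with d(z,a*)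 ≤ 2·r_j. -/
/-!
The candidate sets never lose the furthest neighbour: if `z ∈ Z_j` is `2 r_j`-close to `a*`
and `y ∈ Y_{j+1}` is `2 r_{j+1} = r_j`-close to it, then `d(y, z) ≤ 3 r_j ≤ γ r_j`, and since
`d(·, C)` is `1`-Lipschitz and maximised on `P` at `a*`, every `w ∈ Z_j ⊆ P` has
`d(w, C) ≤ d(a*, C) ≤ d(y, C) + r_j`. So `y` survives the pruning and lies in `Z_{j+1}`.
-/

open Metric

namespace FurthestNeighbor

variable {X : Type*} [PseudoMetricSpace X]

/-- The paper's test for `y ∈ Z_{j+1}`, with `Z = Z_j`, `r = r_j` and `f = d(·, C)`. -/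
def PassesScale (f : X → ℝ) (Z : Set X) (γ r : ℝ) (y : X) : Prop :=
  (∃ z ∈ Z, dist y z ≤ γ * r) ∧ ∀ z ∈ Z, f y ≥ f z - r

theorem passesScale_of_dist_le {f : X → ℝ} (hf : LipschitzWith 1 f) {P Z : Set X} {a y z : X}
    {γ r : ℝ} (ha : IsMaxOn f P a) (hγ : 3 ≤ γ) (hZP : Z ⊆ P) (hz : z ∈ Z)
    (hza : dist z a ≤ 2 * r) (hya : dist y a ≤ r) : PassesScale f Z γ r y := by
  have hr : 0 ≤ r := dist_nonneg.trans hya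
  refine ⟨⟨z, hz, ?_⟩, fun w hw => ?_⟩
  · calc dist y z ≤ dist y a + dist z a := dist_triangle_right y z a
      _ ≤ 3 * r := by linarith
      _ ≤ γ * r := by gcongr
  · have hwa : f w ≤ f a := ha (hZP hw)
    have hay : f a ≤ f y + dist a y := by simpa using hf.le_add_mul a y
    linarith [dist_comm a y]

theorem exists_mem_candidates_dist_le {f : X → ℝ} (hf : LipschitzWith 1 f) {P : Set X} {a : X}
    (ha : IsMaxOn f P a) {γ : ℝ} (hγ : 3 ≤ γ) {r : ℕ → ℝ} (hr : ∀ j, 2 * r (j + 1) ≤ r j)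
    {N : ℕ} {Y Z : ℕ → Set X} (hYP : ∀ j ≤ N, Y j ⊆ P) (hZ0P : Z 0 ⊆ P)
    (hZ0 : ∃ z ∈ Z 0, dist z a ≤ 2 * r 0)
    (hcov : ∀ j < N, ∃ y ∈ Y (j + 1), dist y a ≤ 2 * r (j + 1))
    (hZ : ∀ j < N, ∀ y, y ∈ Z (j + 1) ↔ y ∈ Y (j + 1) ∧ PassesScale f (Z j) γ (r j) y) :
    ∀ j ≤ N, Z j ⊆ P ∧ ∃ z ∈ Z j, dist z a ≤ 2 * r j := by
  intro j
  induction j with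
  | zero => exact fun _ => ⟨hZ0P, hZ0⟩
  | succ j ih =>
    intro hjN
    obtain ⟨hZP, z, hz, hza⟩ := ih (Nat.le_of_succ_le hjN)
    obtain ⟨y, hyY, hya⟩ := hcov j hjN
    have hy : y ∈ Z (j + 1) :=
      (hZ j hjN y).2 ⟨hyY, passesScale_of_dist_le hf ha hγ hZP hz hza (hya.trans (hr j))⟩
    exact ⟨fun x hx => hYP (j + 1) hjN ((hZ j hjN x).1 hx).1, y, hy, hya⟩

end FurthestNeighbor

open FurthestNeighbor in
theorem stmt_3_general {X : Type*} [MetricSpace X] (P C : Finset X)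
    (astar : X) (hastar : astar ∈ P)
    (hfar : ∀ p ∈ P, Metric.infDist p (C : Set X) ≤ Metric.infDist astar (C : Set X))
    (γ R₀ : ℝ) (hγ : 4 ≤ γ) (N : ℕ)
    (Y : ℕ → Finset X) (hYP : ∀ j ≤ N, Y j ⊆ P)
    (y₀ : X) (hY0 : Y 0 = {y₀}) (hy₀ : ∀ p ∈ P, dist p y₀ ≤ 2 * R₀)
    (hcov : ∀ j, 1 ≤ j → j ≤ N → ∀ p ∈ P, ∃ y ∈ Y j, dist p y ≤ 2 * (R₀ / 2 ^ j))
    (Z : ℕ → Finset X) (hZ0 : Z 0 = Y 0)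
    (hZ : ∀ j < N, ∀ y : X, y ∈ Z (j + 1) ↔ y ∈ Y (j + 1) ∧
      (∃ z ∈ Z j, dist y z ≤ γ * (R₀ / 2 ^ j)) ∧
      (∀ z ∈ Z j, Metric.infDist y (C : Set X) ≥
        Metric.infDist z (C : Set X) - R₀ / 2 ^ j)) :
    ∀ j ≤ N, ∃ z ∈ Z j, dist z astar ≤ 2 * (R₀ / 2 ^ j) := by
  have hr (j : ℕ) : 2 * (R₀ / 2 ^ (j + 1)) ≤ R₀ / 2 ^ j :=
    (by rw [pow_succ]; field_simp : 2 * (R₀ / 2 ^ (j + 1)) = R₀ / 2 ^ j).le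
  have hZ0P : (Z 0 : Set X) ⊆ P := by rw [hZ0]; exact_mod_cast hYP 0 N.zero_le
  have hz₀ : ∃ z ∈ (Z 0 : Set X), dist z astar ≤ 2 * (R₀ / 2 ^ 0) :=
    ⟨y₀, by simp [hZ0, hY0], by simpa [dist_comm] using hy₀ astar hastar⟩
  have hcov' (j : ℕ) (hj : j < N) : ∃ y ∈ (Y (j + 1) : Set X),
      dist y astar ≤ 2 * (R₀ / 2 ^ (j + 1)) := by
    simpa only [Finset.mem_coe, dist_comm astar] using hcov (j + 1) j.succ_pos' hj astar hastar
  intro j hj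
  exact (exists_mem_candidates_dist_le (lipschitz_infDist_pt (C : Set X)) hfar (by linarith)
    (r := fun j => R₀ / 2 ^ j) (Z := fun j => Z j) hr (fun j hj => by exact_mod_cast hYP j hj)
    hZ0P hz₀ hcov' hZ j hj).2

/-- Lemma 3 of the paper (every candidate set `Z_j` contains a point
within `2 r_j` of an exact furthest neighbor `a*`). -/
theorem stmt_3 {X : Type*} [MetricSpace X] (P C : Finset X)
    (hP : P.Nonempty) (hC : C.Nonempty)
    (astar : X) (hastar : astar ∈ P)
    (hfar : ∀ p ∈ P, Metric.infDist p (C : Set X) ≤ Metric.infDist astar (C : Set X))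
    (γ R₀ : ℝ) (hγ : 4 ≤ γ) (hR₀ : 0 < R₀) (N : ℕ)
    (Y : ℕ → Finset X) (hYP : ∀ j ≤ N, Y j ⊆ P)
    (y₀ : X) (hY0 : Y 0 = {y₀}) (hy₀ : ∀ p ∈ P, dist p y₀ ≤ 2 * R₀)
    (hcov : ∀ j, 1 ≤ j → j ≤ N → ∀ p ∈ P, ∃ y ∈ Y j, dist p y ≤ 2 * (R₀ / 2 ^ j))
    (Z : ℕ → Finset X) (hZ0 : Z 0 = Y 0)
    (hZ : ∀ j < N, ∀ y : X, y ∈ Z (j + 1) ↔ y ∈ Y (j + 1) ∧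
      (∃ z ∈ Z j, dist y z ≤ γ * (R₀ / 2 ^ j)) ∧
      (∀ z ∈ Z j, Metric.infDist y (C : Set X) ≥
        Metric.infDist z (C : Set X) - R₀ / 2 ^ j)) :
    ∀ j ≤ N, ∃ z ∈ Z j, dist z astar ≤ 2 * (R₀ / 2 ^ j) :=
  stmt_3_general P C astar hastar hfar γ R₀ hγ N Y hYP y₀ hY0 hy₀ hcov Z hZ0 hZ
end

section
/- Let (X,d) be a metric space, let P and C be finite nonempty subsets of X, and let a* ∈ P satisfy d(a*,C) = max_{p∈P} d(p,C). Let ε > 0, r > 0, and let Z be a finite nonempty subset of X containing a point z₀ with d(z₀,a*) ≤ 2r. If r ≤ (ε/2)·max_{z∈Z} d(z,C), then (1+ε)·max_{z∈Z} d(z,C) ≥ max_{p∈P} d(p,C). -/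
open Metric

theorem Metric.infDist_le_sup'_infDist_add_dist {X : Type*} [PseudoMetricSpace X] (s : Set X)
    {Z : Finset X} (hZ : Z.Nonempty) {z : X} (hz : z ∈ Z) (a : X) :
    infDist a s ≤ Z.sup' hZ (fun z => infDist z s) + dist a z :=
  calc infDist a s ≤ infDist z s + dist a z := infDist_le_infDist_add_dist
    _ ≤ Z.sup' hZ (fun z => infDist z s) + dist a z := by
      gcongr
      exact Z.le_sup' (fun z => infDist z s) hz

theorem stmt_4_general {X : Type*} [MetricSpace X] (P C : Finset X)
    (hP : P.Nonempty)
    (astar : X)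
    (hfar : ∀ p ∈ P, Metric.infDist p (C : Set X) ≤ Metric.infDist astar (C : Set X))
    (ε r : ℝ)
    (Z : Finset X) (hZ : Z.Nonempty)
    (z₀ : X) (hz₀Z : z₀ ∈ Z) (hz₀ : dist z₀ astar ≤ 2 * r)
    (hterm : r ≤ ε / 2 * Z.sup' hZ (fun z => Metric.infDist z (C : Set X))) :
    (1 + ε) * Z.sup' hZ (fun z => Metric.infDist z (C : Set X)) ≥
      P.sup' hP (fun p => Metric.infDist p (C : Set X)) := by
  set M := Z.sup' hZ (fun z => infDist z (C : Set X))
  have hclose : dist astar z₀ ≤ ε * M := by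
    rw [dist_comm]
    linarith
  calc P.sup' hP (fun p => infDist p (C : Set X))
      ≤ infDist astar (C : Set X) := P.sup'_le _ _ hfar
    _ ≤ M + dist astar z₀ := infDist_le_sup'_infDist_add_dist _ hZ hz₀Z astar
    _ ≤ (1 + ε) * M := by linarith

/-- key inequality of Lemma 4 (termination of AFN gives a
`(1+ε)`-approximate furthest neighbor). -/
theorem stmt_4 {X : Type*} [MetricSpace X] (P C : Finset X)
    (hP : P.Nonempty) (hC : C.Nonempty)
    (astar : X) (hastar : astar ∈ P)
    (hfar : ∀ p ∈ P, Metric.infDist p (C : Set X) ≤ Metric.infDist astar (C : Set X))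
    (ε r : ℝ) (hε : 0 < ε) (hr : 0 < r)
    (Z : Finset X) (hZ : Z.Nonempty)
    (z₀ : X) (hz₀Z : z₀ ∈ Z) (hz₀ : dist z₀ astar ≤ 2 * r)
    (hterm : r ≤ ε / 2 * Z.sup' hZ (fun z => Metric.infDist z (C : Set X))) :
    (1 + ε) * Z.sup' hZ (fun z => Metric.infDist z (C : Set X)) ≥
      P.sup' hP (fun p => Metric.infDist p (C : Set X)) :=
  stmt_4_general P C hP astar hfar ε r Z hZ z₀ hz₀Z hz₀ hterm
end

section
/- Let (X,d) be a metric space satisfying the M-doubling condition for some natural number M ≥ 1. Let C be a finite nonempty subset of X, ε > 0, γ > 0, r > 0. Let Z be a finite subset of X with d(z,C) ≤ 2r/ε for every z ∈ Z, and let Y' be a set with d(x,y) ≥ r/2 for all distinct x,y ∈ Y'. Define Z' = { y ∈ Y' : (∃ z ∈ Z with d(y,z) ≤ γ·r) and (for every z ∈ Z, d(y,C) ≥ d(z,C) − r) }. Then Z' is finite and, for every natural number k with 2^k > 4·(γ + 2/ε), |Z'| ≤ |C|·M^k. -/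
open Metric Set

/-- Iterated doubling: a ball of radius `ρ` can be covered by `M^k` balls of
radius `ρ / 2^k`. -/
lemma cover_pow {X : Type*} [MetricSpace X] (M : ℕ)
    (hdbl : ∀ (x : X) (ρ : ℝ), 0 < ρ → ∃ T : Finset X, T.card ≤ M ∧
      Metric.closedBall x ρ ⊆ ⋃ t ∈ T, Metric.closedBall t (ρ / 2)) :
    ∀ (k : ℕ) (x : X) (ρ : ℝ), 0 < ρ → ∃ T : Finset X, T.card ≤ M ^ k ∧
      Metric.closedBall x ρ ⊆ ⋃ t ∈ T, Metric.closedBall t (ρ / 2 ^ k) := by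
  classical
  intro k
  induction k with
  | zero =>
    intro x ρ hρ
    exact ⟨{x}, by simp, by simp⟩
  | succ k ih =>
    intro x ρ hρ
    obtain ⟨T0, hT0card, hT0cov⟩ := hdbl x ρ hρ
    choose T hTcard hTcov using fun t => ih t (ρ / 2) (by linarith)
    refine ⟨T0.biUnion T, ?_, ?_⟩
    · calc (T0.biUnion T).card ≤ ∑ t ∈ T0, (T t).card := Finset.card_biUnion_le
        _ ≤ ∑ _t ∈ T0, M ^ k := Finset.sum_le_sum fun t _ => hTcard t
        _ = T0.card * M ^ k := by rw [Finset.sum_const, smul_eq_mul]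
        _ ≤ M * M ^ k := Nat.mul_le_mul_right _ hT0card
        _ = M ^ (k + 1) := (pow_succ' M k).symm
    · intro y hy
      obtain ⟨t, ht, hyt⟩ := Set.mem_iUnion₂.1 (hT0cov hy)
      obtain ⟨s, hs, hys⟩ := Set.mem_iUnion₂.1 (hTcov t hyt)
      refine Set.mem_iUnion₂.2 ⟨s, Finset.mem_biUnion.2 ⟨t, ht, hs⟩, ?_⟩
      have : ρ / 2 / 2 ^ k = ρ / 2 ^ (k + 1) := by
        rw [pow_succ]; ring
      rwa [this] at hys

/-- explicit-constant form of Lemma 5 (size bound on the candidate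
set `Z'`). -/
theorem stmt_6 {X : Type*} [MetricSpace X] (M : ℕ) (hM : 1 ≤ M)
    (hdbl : ∀ (x : X) (ρ : ℝ), 0 < ρ → ∃ T : Finset X, T.card ≤ M ∧
      Metric.closedBall x ρ ⊆ ⋃ t ∈ T, Metric.closedBall t (ρ / 2))
    (C : Finset X) (hC : C.Nonempty)
    (ε γ r : ℝ) (hε : 0 < ε) (hγ : 0 < γ) (hr : 0 < r)
    (Z : Finset X) (hZ : ∀ z ∈ Z, Metric.infDist z (C : Set X) ≤ 2 * r / ε)
    (Y' : Set X) (hsep : ∀ x ∈ Y', ∀ y ∈ Y', x ≠ y → r / 2 ≤ dist x y)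
    (Z' : Set X)
    (hZ' : Z' = {y ∈ Y' | (∃ z ∈ Z, dist y z ≤ γ * r) ∧
      ∀ z ∈ Z, Metric.infDist y (C : Set X) ≥ Metric.infDist z (C : Set X) - r}) :
    Z'.Finite ∧ ∀ k : ℕ, 4 * (γ + 2 / ε) < 2 ^ k → Z'.ncard ≤ C.card * M ^ k := by
  set R : ℝ := γ * r + 2 * r / ε with hR
  have hRpos : 0 < R := by positivity
  -- Z' is covered by balls of radius R around points of C
  have hcov : Z' ⊆ ⋃ c ∈ C, Metric.closedBall c R := by
    intro y hy
    rw [hZ'] at hy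
    obtain ⟨hyY, ⟨z, hzZ, hyz⟩, -⟩ := hy
    have h1 : Metric.infDist y (C : Set X) ≤ Metric.infDist z (C : Set X) + dist y z :=
      Metric.infDist_le_infDist_add_dist
    have h2 : Metric.infDist y (C : Set X) ≤ R := by
      have := hZ z hzZ; rw [hR]; linarith
    have hCne : (C : Set X).Nonempty := by exact_mod_cast hC
    obtain ⟨c, hc, hdc⟩ := (C.finite_toSet.isCompact).exists_infDist_eq_dist hCne y
    exact Set.mem_iUnion₂.2 ⟨c, hc, by rw [Metric.mem_closedBall]; rw [hdc] at h2; exact h2⟩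
  -- core counting for a fixed k with the gap condition
  have key : ∀ k : ℕ, 4 * (γ + 2 / ε) < 2 ^ k →
      Z'.Finite ∧ Z'.ncard ≤ C.card * M ^ k := by
    classical
    intro k hk
    -- cover each big ball with M^k small balls
    choose T hTcard hTcov using fun c : X => cover_pow M hdbl k c R hRpos
    set TT : Finset X := C.biUnion T with hTT
    have hTTcard : TT.card ≤ C.card * M ^ k := by
      calc TT.card ≤ ∑ c ∈ C, (T c).card := Finset.card_biUnion_le
        _ ≤ ∑ _c ∈ C, M ^ k := Finset.sum_le_sum fun c _ => hTcard c
        _ = C.card * M ^ k := by rw [Finset.sum_const, smul_eq_mul]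
    have hZTT : Z' ⊆ ⋃ t ∈ TT, Metric.closedBall t (R / 2 ^ k) := by
      intro y hy
      obtain ⟨c, hc, hyc⟩ := Set.mem_iUnion₂.1 (hcov hy)
      obtain ⟨t, ht, hyt⟩ := Set.mem_iUnion₂.1 (hTcov c hyc)
      exact Set.mem_iUnion₂.2 ⟨t, Finset.mem_biUnion.2 ⟨c, hc, ht⟩, hyt⟩
    -- small balls have diameter < r/2
    have hsmall : 2 * (R / 2 ^ k) < r / 2 := by
      have h2k : (0:ℝ) < 2 ^ k := by positivity
      have h4R : 4 * R < r * 2 ^ k := by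
        have heq : 4 * R = r * (4 * (γ + 2 / ε)) := by rw [hR]; field_simp
        have h' := mul_lt_mul_of_pos_left hk hr
        rw [heq]; exact h'
      have hrw : 2 * (R / 2 ^ k) = (2 * R) / 2 ^ k := by ring
      rw [hrw, div_lt_div_iff₀ h2k (by norm_num : (0:ℝ) < 2)]
      linarith
    -- injection from Z' into TT
    classical
    set f : X → X := fun y =>
      if h : ∃ t ∈ TT, y ∈ Metric.closedBall t (R / 2 ^ k) then h.choose else y with hf
    have hfmem : ∀ y ∈ Z', f y ∈ TT ∧ y ∈ Metric.closedBall (f y) (R / 2 ^ k) := by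
      intro y hy
      have h : ∃ t ∈ TT, y ∈ Metric.closedBall t (R / 2 ^ k) := by
        obtain ⟨t, ht, hyt⟩ := Set.mem_iUnion₂.1 (hZTT hy)
        exact ⟨t, ht, hyt⟩
      rw [hf]; simp only [dif_pos h]
      exact ⟨h.choose_spec.1, h.choose_spec.2⟩
    have hinj : Set.InjOn f Z' := by
      intro a ha b hb hab
      by_contra hne
      have haY : a ∈ Y' := by rw [hZ'] at ha; exact ha.1
      have hbY : b ∈ Y' := by rw [hZ'] at hb; exact hb.1
      have hsepab := hsep a haY b hbY hne
      have h1 := (hfmem a ha).2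
      have h2 := (hfmem b hb).2
      rw [Metric.mem_closedBall] at h1 h2
      have : dist a b ≤ dist a (f a) + dist b (f b) := by
        rw [hab]; exact dist_triangle_right a b (f b)
      linarith
    have hfin : Z'.Finite := by
      apply Set.Finite.of_finite_image _ hinj
      exact TT.finite_toSet.subset (by rintro _ ⟨y, hy, rfl⟩; exact (hfmem y hy).1)
    refine ⟨hfin, ?_⟩
    calc Z'.ncard ≤ (TT : Set X).ncard :=
          Set.ncard_le_ncard_of_injOn f (fun y hy => (hfmem y hy).1) hinj TT.finite_toSet
      _ = TT.card := Set.ncard_coe_finset TT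
      _ ≤ C.card * M ^ k := hTTcard
  obtain ⟨k0, hk0⟩ := pow_unbounded_of_one_lt (4 * (γ + 2 / ε)) (by norm_num : (1:ℝ) < 2)
  exact ⟨(key k0 hk0).1, fun k hk => (key k hk).2⟩
end

section
/- Let (X,d) be a metric space, P a finite nonempty subset of X, k ≥ 1 an integer, and 0 < ε ≤ 1. Let q₁, …, q_k ∈ P be such that, writing C_i = {q₁, …, q_i}, for every 1 ≤ i < k one has max_{p∈P} d(p, C_i) ≤ (1 + ε/5)·d(C_i, q_{i+1}). Let q ∈ P satisfy max_{p∈P} d(p, C_k) ≤ (1 + ε/5)·d(C_k, q), and set r = (1 + ε/5)·d(C_k, q). Then: (a) every p ∈ P satisfies d(p, C_k) ≤ r; and (b) for every finite nonempty set O ⊆ X with |O| ≤ k, r ≤ (2 + ε)·max_{p∈P} d(p, O). -/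
/-!
Let `δ = d(q_f, C_k)`. Because each `q_{j}` was an approximate furthest point from `C_{j-1}`,
the `k + 1` points `q_1, …, q_k, q_f` are pairwise at distance at least `δ / (1 + ε/5)`.
Any `O` with at most `k` points has two of them with the same nearest point of `O`, so they are
at distance at most `2R`, where `R` is the covering radius of `O`. Hence
`r = (1 + ε/5) δ ≤ 2 (1 + ε/5)² R ≤ (2 + ε) R` for `ε ≤ 1`.
-/

open Metric Finset

theorem exists_ne_dist_le_two_mul_of_card_lt {X ι : Type*} [MetricSpace X] {s : Finset ι}
    {O : Finset X} (hO : O.Nonempty) (hcard : #O < #s) {x : ι → X} {R : ℝ}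
    (hR : ∀ i ∈ s, infDist (x i) (O : Set X) ≤ R) :
    ∃ i ∈ s, ∃ j ∈ s, i ≠ j ∧ dist (x i) (x j) ≤ 2 * R := by
  have hnearest (i : ι) : ∃ o ∈ O, infDist (x i) (O : Set X) = dist (x i) o :=
    O.finite_toSet.isCompact.exists_infDist_eq_dist (mod_cast hO) (x i)
  choose nearest hmem hdist using hnearest
  obtain ⟨i, hi, j, hj, hij, hsame⟩ :=
    exists_ne_map_eq_of_card_lt_of_maps_to hcard fun i _ => hmem i
  refine ⟨i, hi, j, hj, hij, ?_⟩
  calc dist (x i) (x j) ≤ dist (x i) (nearest i) + dist (x j) (nearest j) :=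
        hsame ▸ dist_triangle_right _ _ _
    _ ≤ 2 * R := by linarith [hdist i ▸ hR i hi, hdist j ▸ hR j hj]

section

variable {X : Type*} [DecidableEq X]

/-- The centers `C_i = {q_1, …, q_i}` chosen in the first `i` greedy steps. -/
def prefixCenters (q : ℕ → X) (i : ℕ) : Finset X := (Icc 1 i).image q

theorem mem_prefixCenters {q : ℕ → X} {i m : ℕ} (hi : 1 ≤ i) (him : i ≤ m) :
    q i ∈ prefixCenters q m :=
  mem_image_of_mem q (mem_Icc.2 ⟨hi, him⟩)

theorem prefixCenters_mono (q : ℕ → X) : Monotone (prefixCenters q) :=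
  fun _ _ h => image_subset_image (Icc_subset_Icc_right h)

variable [MetricSpace X]

theorem infDist_prefixCenters_le_mul_dist {P : Finset X} {q : ℕ → X} {k : ℕ} {c : ℝ}
    (hc : 0 ≤ c) (hgreedy : ∀ i, 1 ≤ i → i < k → ∀ p ∈ P,
      infDist p (prefixCenters q i : Set X) ≤
        c * infDist (q (i + 1)) (prefixCenters q i : Set X))
    {p : X} (hp : p ∈ P) {i j : ℕ} (hi : 1 ≤ i) (hij : i < j) (hjk : j ≤ k) :
    infDist p (prefixCenters q k : Set X) ≤ c * dist (q i) (q j) := by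
  obtain ⟨m, rfl⟩ : ∃ m, j = m + 1 := ⟨j - 1, by omega⟩
  have hqi : q i ∈ prefixCenters q m := mem_prefixCenters hi (by omega)
  calc infDist p (prefixCenters q k : Set X)
      ≤ infDist p (prefixCenters q m : Set X) :=
        infDist_le_infDist_of_subset (mod_cast prefixCenters_mono q (by omega)) ⟨q i, hqi⟩
    _ ≤ c * infDist (q (m + 1)) (prefixCenters q m : Set X) :=
        hgreedy m (by omega) (by omega) p hp
    _ ≤ c * dist (q i) (q (m + 1)) := by
        rw [dist_comm]
        exact mul_le_mul_of_nonneg_left (infDist_le_dist_of_mem (mod_cast hqi)) hc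

/-- Appending the final far point `qf` as `q_{k+1}` keeps the greedy points pairwise separated. -/
theorem infDist_prefixCenters_le_mul_dist_update {P : Finset X} {q : ℕ → X} {k : ℕ} {c : ℝ}
    (hc : 1 ≤ c) (hgreedy : ∀ i, 1 ≤ i → i < k → ∀ p ∈ P,
      infDist p (prefixCenters q i : Set X) ≤
        c * infDist (q (i + 1)) (prefixCenters q i : Set X))
    {qf : X} (hqf : qf ∈ P) {i j : ℕ} (hi : i ∈ Icc 1 (k + 1)) (hj : j ∈ Icc 1 (k + 1))
    (hij : i ≠ j) :
    infDist qf (prefixCenters q k : Set X) ≤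
      c * dist (Function.update q (k + 1) qf i) (Function.update q (k + 1) qf j) := by
  wlog hlt : i < j generalizing i j
  · rw [dist_comm]
    exact this hj hi hij.symm (by omega)
  rw [mem_Icc] at hi hj
  rw [Function.update_of_ne (by omega)]
  rcases (show j ≤ k ∨ j = k + 1 by omega) with hjk | rfl
  · rw [Function.update_of_ne (by omega)]
    exact infDist_prefixCenters_le_mul_dist (by linarith) hgreedy hqf hi.1 hlt hjk
  · rw [Function.update_self, dist_comm]
    calc infDist qf (prefixCenters q k : Set X) ≤ dist qf (q i) :=
          infDist_le_dist_of_mem (mod_cast mem_prefixCenters hi.1 (by omega))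
      _ ≤ c * dist qf (q i) := le_mul_of_one_le_left dist_nonneg hc

end

theorem two_mul_one_add_div_five_sq_le {ε : ℝ} (h0 : 0 ≤ ε) (h1 : ε ≤ 1) :
    2 * (1 + ε / 5) ^ 2 ≤ 2 + ε := by
  nlinarith

theorem stmt_8_general {X : Type*} [MetricSpace X] [DecidableEq X] (P : Finset X) (hP : P.Nonempty)
    (k : ℕ) (ε : ℝ) (hε0 : 0 < ε) (hε1 : ε ≤ 1)
    (q : ℕ → X) (hqP : ∀ i, 1 ≤ i → i ≤ k → q i ∈ P)
    (Cs : ℕ → Finset X) (hCs : ∀ i, Cs i = (Finset.Icc 1 i).image q)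
    (hgreedy : ∀ i, 1 ≤ i → i < k → ∀ p ∈ P,
      Metric.infDist p (Cs i : Set X) ≤
        (1 + ε / 5) * Metric.infDist (q (i + 1)) (Cs i : Set X))
    (qf : X) (hqf : qf ∈ P)
    (hqfar : ∀ p ∈ P, Metric.infDist p (Cs k : Set X) ≤
      (1 + ε / 5) * Metric.infDist qf (Cs k : Set X))
    (r : ℝ) (hr : r = (1 + ε / 5) * Metric.infDist qf (Cs k : Set X)) :
    (∀ p ∈ P, Metric.infDist p (Cs k : Set X) ≤ r) ∧
    (∀ O : Finset X, O.Nonempty → O.card ≤ k →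
      r ≤ (2 + ε) * P.sup' hP (fun p => Metric.infDist p (O : Set X))) := by
  refine ⟨fun p hp => hr ▸ hqfar p hp, fun O hO hOk => ?_⟩
  obtain rfl : Cs = prefixCenters q := funext hCs
  set R := P.sup' hP (fun p => infDist p (O : Set X))
  have hR : 0 ≤ R := le_sup'_of_le _ hqf infDist_nonneg
  have hxP : ∀ i ∈ Icc 1 (k + 1), Function.update q (k + 1) qf i ∈ P := by
    intro i hi
    rw [mem_Icc] at hi
    rcases (show i ≤ k ∨ i = k + 1 by omega) with hik | rfl
    · rw [Function.update_of_ne (by omega)]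
      exact hqP i hi.1 hik
    · rwa [Function.update_self]
  obtain ⟨i, hi, j, hj, hij, hdist⟩ := exists_ne_dist_le_two_mul_of_card_lt
    (s := Icc 1 (k + 1)) (x := Function.update q (k + 1) qf) (R := R) hO
    (by simp only [Nat.card_Icc]; omega) fun i hi => le_sup' (fun p => infDist p O) (hxP i hi)
  have hc : (1 : ℝ) ≤ 1 + ε / 5 := by linarith
  have hsep := infDist_prefixCenters_le_mul_dist_update hc hgreedy hqf hi hj hij
  calc r ≤ (1 + ε / 5) * ((1 + ε / 5) * (2 * R)) := by
        rw [hr]; gcongr; exact hsep.trans (by gcongr)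
    _ = 2 * (1 + ε / 5) ^ 2 * R := by ring
    _ ≤ (2 + ε) * R := by gcongr; exact two_mul_one_add_div_five_sq_le hε0.le hε1

/-- correctness of the modified Gonzalez greedy algorithm
(Theorem 4 of the paper): it returns a `(2+ε)`-approximate `k`-center solution. -/
theorem stmt_8 {X : Type*} [MetricSpace X] [DecidableEq X] (P : Finset X) (hP : P.Nonempty)
    (k : ℕ) (hk : 1 ≤ k) (ε : ℝ) (hε0 : 0 < ε) (hε1 : ε ≤ 1)
    (q : ℕ → X) (hqP : ∀ i, 1 ≤ i → i ≤ k → q i ∈ P)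
    (Cs : ℕ → Finset X) (hCs : ∀ i, Cs i = (Finset.Icc 1 i).image q)
    (hgreedy : ∀ i, 1 ≤ i → i < k → ∀ p ∈ P,
      Metric.infDist p (Cs i : Set X) ≤
        (1 + ε / 5) * Metric.infDist (q (i + 1)) (Cs i : Set X))
    (qf : X) (hqf : qf ∈ P)
    (hqfar : ∀ p ∈ P, Metric.infDist p (Cs k : Set X) ≤
      (1 + ε / 5) * Metric.infDist qf (Cs k : Set X))
    (r : ℝ) (hr : r = (1 + ε / 5) * Metric.infDist qf (Cs k : Set X)) :
    (∀ p ∈ P, Metric.infDist p (Cs k : Set X) ≤ r) ∧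
    (∀ O : Finset X, O.Nonempty → O.card ≤ k →
      r ≤ (2 + ε) * P.sup' hP (fun p => Metric.infDist p (O : Set X))) :=
  stmt_8_general P hP k ε hε0 hε1 q hqP Cs hCs hgreedy qf hqf hqfar r hr
end

section
/- Let (X,d) be a metric space, P a finite nonempty subset of X, and ε > 0. Let C' ⊆ C be finite nonempty subsets of X, let q' ∈ C', and let q'' ∈ X satisfy max_{p∈P} d(p, C') ≤ (1 + ε/5)·d(C', q''). Suppose there exist o ∈ X and ρ ≥ 0 with d(q', o) ≤ ρ and d(q'', o) ≤ ρ. Then max_{p∈P} d(p, C) ≤ (2 + 2ε/5)·ρ. -/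
open Metric

lemma Metric.infDist_le_two_mul_of_dist_le {X : Type*} [PseudoMetricSpace X] {s : Set X}
    {q' q'' o : X} {ρ : ℝ} (hq' : q' ∈ s) (h1 : dist q' o ≤ ρ) (h2 : dist q'' o ≤ ρ) :
    infDist q'' s ≤ 2 * ρ :=
  calc infDist q'' s ≤ dist q'' q' := infDist_le_dist_of_mem hq'
    _ ≤ dist q'' o + dist q' o := dist_triangle_right _ _ _
    _ ≤ 2 * ρ := by linarith

theorem stmt_9_general {X : Type*} [MetricSpace X] (P : Finset X)
    (ε : ℝ) (hε : 0 < ε)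
    (C' C : Finset X) (hsub : C' ⊆ C)
    (q' : X) (hq' : q' ∈ C') (q'' : X)
    (hfar : ∀ p ∈ P, Metric.infDist p (C' : Set X) ≤
      (1 + ε / 5) * Metric.infDist q'' (C' : Set X))
    (o : X) (ρ : ℝ) (h1 : dist q' o ≤ ρ) (h2 : dist q'' o ≤ ρ) :
    ∀ p ∈ P, Metric.infDist p (C : Set X) ≤ (2 + 2 * ε / 5) * ρ := by
  intro p hp
  have hq'' : infDist q'' (C' : Set X) ≤ 2 * ρ :=
    infDist_le_two_mul_of_dist_le (Finset.mem_coe.2 hq') h1 h2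
  calc infDist p (C : Set X) ≤ infDist p (C' : Set X) :=
        infDist_le_infDist_of_subset (Finset.coe_subset.2 hsub) ⟨q', hq'⟩
    _ ≤ (1 + ε / 5) * infDist q'' (C' : Set X) := hfar p hp
    _ ≤ (1 + ε / 5) * (2 * ρ) := by gcongr
    _ = (2 + 2 * ε / 5) * ρ := by ring

/-- Case 2 of the proof of Theorem 4 (two greedy centers in a common
optimal ball bound the covering radius). -/
theorem stmt_9 {X : Type*} [MetricSpace X] (P : Finset X) (hP : P.Nonempty)
    (ε : ℝ) (hε : 0 < ε)
    (C' C : Finset X) (hC' : C'.Nonempty) (hsub : C' ⊆ C)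
    (q' : X) (hq' : q' ∈ C') (q'' : X)
    (hfar : ∀ p ∈ P, Metric.infDist p (C' : Set X) ≤
      (1 + ε / 5) * Metric.infDist q'' (C' : Set X))
    (o : X) (ρ : ℝ) (hρ : 0 ≤ ρ) (h1 : dist q' o ≤ ρ) (h2 : dist q'' o ≤ ρ) :
    ∀ p ∈ P, Metric.infDist p (C : Set X) ≤ (2 + 2 * ε / 5) * ρ :=
  stmt_9_general P ε hε C' C hsub q' hq' q'' hfar o ρ h1 h2
end

section
/- In the Modified MEB setup, with T = ⌊6/ε⌋, the following hold: (a) for every 1 ≤ i ≤ T, every x ∈ P satisfies ‖x − m_i‖ ≤ r_i; and (b) for every c' ∈ ℝ^D, there exists 1 ≤ i ≤ T with r_i ≤ (1 + ε)·max_{x∈P} ‖x − c'‖. In particular, taking c' a center of the minimum enclosing ball of P with radius r*, some ball B(m_i, r_i) with 1 ≤ i ≤ T contains P and has radius at most (1+ε)r*. -/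
set_option maxHeartbeats 1000000

private lemma meb_expand {D : ℕ} (u v : EuclideanSpace ℝ (Fin D)) (t : ℝ) :
    ‖u + t • v‖ ^ 2 = ‖u‖ ^ 2 + 2 * t * inner ℝ u v + t ^ 2 * ‖v‖ ^ 2 := by
  rw [norm_add_sq_real, real_inner_smul_right, norm_smul, Real.norm_eq_abs, mul_pow, sq_abs]
  ring

private lemma meb_L1 (ε R dd δi : ℝ) (hε0 : 0 < ε) (hε1 : ε ≤ 1) (hR : 0 < R)
    (hbad : (1 + ε) * R < (1 + ε / 3) * dd) (htri : dd ≤ R + δi * R) :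
    2 * ε < (3 + ε) * δi ∧ ε / 2 < δi ∧ (1 + ε / 3) * R ≤ dd := by
  have h1 : 2 * ε < (3 + ε) * δi := by nlinarith
  refine ⟨h1, by nlinarith, ?_⟩
  have h2 : (1 + ε/3) * (1 + ε/3) ≤ 1 + ε := by nlinarith
  have h3 : (1 + ε/3) * ((1 + ε/3) * R) < (1 + ε/3) * dd := by
    nlinarith [mul_le_mul_of_nonneg_right h2 hR.le]
  exact ((mul_lt_mul_iff_right₀ (by linarith)).mp h3).le

private lemma meb_L2 (ε δi : ℝ) (hε0 : 0 < ε) (hε1 : ε ≤ 1)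
    (hhalf : ε / 2 < δi) (hd1 : δi ≤ 1) :
    0 ≤ (δi ^ 2 + (1 + ε / 3) ^ 2 - 1) / (2 * (1 + ε / 3) ^ 2) ∧
    (δi ^ 2 + (1 + ε / 3) ^ 2 - 1) / (2 * (1 + ε / 3) ^ 2) ≤ 1 ∧
    0 ≤ 1 - ((1 + (1 + ε / 3) ^ 2 - δi ^ 2) / (2 * (1 + ε / 3))) ^ 2 := by
  have hα0 : (0:ℝ) < 1 + ε / 3 := by linarith
  refine ⟨div_nonneg (by nlinarith) (by positivity), ?_, ?_⟩
  · rw [div_le_one (by positivity)]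
    nlinarith
  · have hβ0 : 0 ≤ (1 + (1 + ε / 3) ^ 2 - δi ^ 2) / (2 * (1 + ε / 3)) :=
      div_nonneg (by nlinarith) (by positivity)
    have hβ1 : (1 + (1 + ε / 3) ^ 2 - δi ^ 2) / (2 * (1 + ε / 3)) ≤ 1 := by
      rw [div_le_one (by positivity)]
      nlinarith
    nlinarith

private lemma meb_L4 (ε n δi : ℝ) (hε0 : 0 < ε) (hε1 : ε ≤ 1) (hn : 1 ≤ n)
    (hinv : (1 + ε / 3) ^ 2 * (n - 1) ^ 2 ≤ (1 - δi ^ 2) * (n + 1) ^ 2) :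
    (1 + ε / 3) ^ 2 * n ^ 2 ≤
      ((1 + (1 + ε / 3) ^ 2 - δi ^ 2) / (2 * (1 + ε / 3))) ^ 2 * (n + 2) ^ 2 := by
  have hα0 : (0:ℝ) < 1 + ε / 3 := by linarith
  have hkey2 : 2 * (1 + ε/3)^2 * n ≤ (n + 2) * ((1 + ε/3)^2 + (1 - δi ^2)) := by
    have hh := mul_le_mul_of_nonneg_right hinv (show (0:ℝ) ≤ n + 2 by linarith)
    nlinarith [sq_nonneg (1 + ε/3), hh]
  have hlhs0 : 0 ≤ 2 * (1 + ε/3)^2 * n := by positivity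
  have hsq := pow_le_pow_left₀ hlhs0 hkey2 2
  rw [div_pow, div_mul_eq_mul_div, le_div_iff₀ (by positivity)]
  nlinarith [hsq]

private lemma meb_L5 (ε t δT : ℝ) (hε0 : 0 < ε) (hε1 : ε ≤ 1) (ht6 : 6 ≤ t)
    (hTu : 6 < ε * (t + 1)) (hDT : 2 * ε < (3 + ε) * δT)
    (hinv : (1 + ε / 3) ^ 2 * (t - 1) ^ 2 ≤ (1 - δT ^ 2) * (t + 1) ^ 2) : False := by
  have step1 : (3 - ε) * (t + 1) ≤ 3 * (t - 1) := by nlinarith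
  have step2 : (9 - ε^2) * (t + 1) ≤ 9 * ((1 + ε/3) * (t - 1)) := by
    nlinarith [mul_le_mul_of_nonneg_left step1 (show (0:ℝ) ≤ 3 + ε by linarith)]
  have step3 : (9 - ε^2)^2 * (t+1)^2 ≤ 81 * ((1 + ε/3)^2 * (t-1)^2) := by
    have h0 : 0 ≤ (9 - ε^2) * (t + 1) := by nlinarith
    have h1 := pow_le_pow_left₀ h0 step2 2
    nlinarith [h1]
  have hF : 81 * δT^2 ≤ ε^2 * (18 - ε^2) := by
    have h1 : (9 - ε^2)^2 ≤ 81 * (1 - δT^2) := by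
      have hpos : (0:ℝ) < (t+1)^2 := by positivity
      have h2 : (9 - ε^2)^2 * (t+1)^2 ≤ 81 * (1 - δT^2) * (t+1)^2 := by
        nlinarith [hinv, step3]
      exact le_of_mul_le_mul_right (by linarith) hpos
    nlinarith [h1]
  have hA' : 4 * ε^2 < δT^2 * (3 + ε)^2 := by
    have h2ε : 2 * ε < δT * (3 + ε) := by linarith
    have h3 := pow_lt_pow_left₀ h2ε (by linarith : (0:ℝ) ≤ 2 * ε) (two_ne_zero)
    nlinarith [h3]
  have h279 : (18 - ε^2) * (3 + ε)^2 ≤ 324 := by nlinarith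
  have hG : 81 * (4 * ε^2) < (ε^2 * (18 - ε^2)) * (3 + ε)^2 := by
    nlinarith [mul_le_mul_of_nonneg_right hF (sq_nonneg (3 + ε)), hA']
  have hH : ε^2 * ((18 - ε^2) * (3 + ε)^2) ≤ ε^2 * 324 :=
    mul_le_mul_of_nonneg_left h279 (sq_nonneg ε)
  nlinarith [hG, hH]

/-- Theorem 6 of the paper (correctness of the modified
Kim–Schwarzwald MEB algorithm). -/
theorem stmt_10 (D : ℕ) (hD : 1 ≤ D)
    (P : Finset (EuclideanSpace ℝ (Fin D))) (hP : P.Nonempty)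
    (ε : ℝ) (hε0 : 0 < ε) (hε1 : ε ≤ 1)
    (p m : ℕ → EuclideanSpace ℝ (Fin D)) (δ : ℕ → ℝ)
    (hp1 : p 1 ∈ P) (hm1 : m 1 = p 1) (hδ1 : δ 1 = 1)
    (hpP : ∀ i, 1 ≤ i → p (i + 1) ∈ P)
    (hafn : ∀ i, 1 ≤ i → ∀ x ∈ P, ‖x - m i‖ ≤ (1 + ε / 3) * ‖p (i + 1) - m i‖)
    (hm : ∀ i, 1 ≤ i → m (i + 1) = m i +
      ((δ i ^ 2 + (1 + ε / 3) ^ 2 - 1) / (2 * (1 + ε / 3) ^ 2)) • (p (i + 1) - m i))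
    (hδ : ∀ i, 1 ≤ i → δ (i + 1) =
      Real.sqrt (1 - ((1 + (1 + ε / 3) ^ 2 - δ i ^ 2) / (2 * (1 + ε / 3))) ^ 2))
    (r : ℕ → ℝ) (hr : ∀ i, r i = (1 + ε / 3) * ‖p (i + 1) - m i‖)
    (T : ℕ) (hT : T = ⌊6 / ε⌋₊) :
    (∀ i, 1 ≤ i → i ≤ T → ∀ x ∈ P, ‖x - m i‖ ≤ r i) ∧
    (∀ c' : EuclideanSpace ℝ (Fin D), ∃ i, 1 ≤ i ∧ i ≤ T ∧
      r i ≤ (1 + ε) * P.sup' hP (fun x => ‖x - c'‖)) := by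
  have hα0 : (0:ℝ) < 1 + ε / 3 := by linarith
  constructor
  · intro i h1 _ x hx
    rw [hr]
    exact hafn i h1 x hx
  intro c'
  set R : ℝ := P.sup' hP (fun x => ‖x - c'‖) with hRdef
  have hR0 : 0 ≤ R := le_trans (norm_nonneg _) (Finset.le_sup' (fun x => ‖x - c'‖) hp1)
  have hRle : ∀ x ∈ P, ‖x - c'‖ ≤ R := fun x hx => Finset.le_sup' (fun x => ‖x - c'‖) hx
  have hT1 : 1 ≤ T := by
    rw [hT]
    have : (1:ℝ) ≤ 6 / ε := by
      rw [le_div_iff₀ hε0]; linarith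
    exact_mod_cast Nat.le_floor (by exact_mod_cast this)
  have hT6 : (6:ℝ) ≤ (T:ℝ) := by
    have : (6:ℝ) ≤ 6 / ε := by
      rw [le_div_iff₀ hε0]; nlinarith
    rw [hT]
    exact_mod_cast Nat.le_floor (show ((6:ℕ):ℝ) ≤ 6 / ε by push_cast; exact this)
  have hTu : 6 < ε * ((T:ℝ) + 1) := by
    have h1 : (6:ℝ) / ε < (⌊6 / ε⌋₊ : ℝ) + 1 := Nat.lt_floor_add_one _
    rw [hT]
    rw [div_lt_iff₀ hε0] at h1
    linarith [h1]
  rcases eq_or_lt_of_le hR0 with hR | hRpos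
  · -- R = 0 : all points coincide with c'
    refine ⟨1, le_rfl, hT1, ?_⟩
    have hp2 : p 2 ∈ P := hpP 1 le_rfl
    have h2 : ‖p 2 - c'‖ ≤ R := hRle _ hp2
    have h1 : ‖p 1 - c'‖ ≤ R := hRle _ hp1
    have hp2c : p 2 - c' = 0 := norm_le_zero_iff.mp (by linarith)
    have hp1c : p 1 - c' = 0 := norm_le_zero_iff.mp (by linarith)
    have hz : p 2 - m 1 = 0 := by
      rw [hm1]
      have e2 : p 2 = c' := by rwa [sub_eq_zero] at hp2c
      have e1 : p 1 = c' := by rwa [sub_eq_zero] at hp1c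
      rw [e2, e1, sub_self]
    rw [hr]
    show (1 + ε / 3) * ‖p (1 + 1) - m 1‖ ≤ (1 + ε) * R
    rw [show (1+1) = 2 from rfl, hz, norm_zero, mul_zero]
    nlinarith
  · -- R > 0 : main argument, by contradiction
    by_contra hcon
    push_neg at hcon
    have key : ∀ i, 1 ≤ i → i ≤ T →
        0 ≤ δ i ∧ δ i ≤ 1 ∧ ‖m i - c'‖ ≤ δ i * R ∧
        (1 + ε/3)^2 * ((i:ℝ) - 1)^2 ≤ (1 - (δ i)^2) * ((i:ℝ) + 1)^2 := by
      intro i hi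
      induction i, hi using Nat.le_induction with
      | base =>
        intro _
        refine ⟨by rw [hδ1]; norm_num, by rw [hδ1], ?_, ?_⟩
        · rw [hm1, hδ1, one_mul]
          exact hRle _ hp1
        · rw [hδ1]; norm_num
      | succ i hi1 ih =>
        intro hiT
        obtain ⟨hd0, hd1, hmd, hinv⟩ := ih (by omega)
        have hbad : (1 + ε) * R < r i := hcon i hi1 (by omega)
        rw [hr] at hbad
        have hpc : ‖p (i+1) - c'‖ ≤ R := hRle _ (hpP i hi1)
        have htri : ‖p (i+1) - m i‖ ≤ R + δ i * R := by
          calc ‖p (i+1) - m i‖ ≤ ‖p (i+1) - c'‖ + ‖m i - c'‖ := by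
                have e : p (i+1) - m i = (p (i+1) - c') - (m i - c') := by abel
                rw [e]
                exact norm_sub_le _ _
            _ ≤ R + δ i * R := add_le_add hpc hmd
        obtain ⟨hDi, hhalf, hdlb⟩ :=
          meb_L1 ε R (‖p (i+1) - m i‖) (δ i) hε0 hε1 hRpos hbad htri
        obtain ⟨hlam0, hlam1, hQ0⟩ := meb_L2 ε (δ i) hε0 hε1 hhalf hd1
        have hmrec := hm i hi1
        have hδrec := hδ i hi1
        have hδsq : δ (i+1) ^ 2
            = 1 - ((1 + (1 + ε / 3) ^ 2 - δ i ^ 2) / (2 * (1 + ε / 3))) ^ 2 := by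
          rw [hδrec, Real.sq_sqrt hQ0]
        have hδ0' : 0 ≤ δ (i+1) := by rw [hδrec]; exact Real.sqrt_nonneg _
        have hδ1' : δ (i+1) ≤ 1 := by
          rw [hδrec]
          have h1 : Real.sqrt (1 - ((1 + (1 + ε / 3) ^ 2 - δ i ^ 2) / (2 * (1 + ε / 3))) ^ 2)
              ≤ Real.sqrt 1 := Real.sqrt_le_sqrt
            (by nlinarith [sq_nonneg ((1 + (1 + ε / 3) ^ 2 - δ i ^ 2) / (2 * (1 + ε / 3)))])
          rwa [Real.sqrt_one] at h1
        -- norm computation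
        have hsum : m (i+1) - c' = (m i - c') +
            ((δ i ^ 2 + (1 + ε / 3) ^ 2 - 1) / (2 * (1 + ε / 3) ^ 2)) • (p (i+1) - m i) := by
          rw [hmrec]; abel
        have hA := meb_expand (m i - c') (p (i+1) - m i)
          ((δ i ^ 2 + (1 + ε / 3) ^ 2 - 1) / (2 * (1 + ε / 3) ^ 2))
        have hB := meb_expand (m i - c') (p (i+1) - m i) 1
        rw [one_smul] at hB
        have hac : (m i - c') + (p (i+1) - m i) = p (i+1) - c' := by abel
        rw [hac] at hB
        have hinner : inner ℝ (m i - c') (p (i+1) - m i)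
            = (‖p (i+1) - c'‖^2 - ‖m i - c'‖^2 - ‖p (i+1) - m i‖^2) / 2 := by
          nlinarith [hB]
        have hstep : ‖m (i+1) - c'‖^2
            = (1 - (δ i ^ 2 + (1 + ε / 3) ^ 2 - 1) / (2 * (1 + ε / 3) ^ 2)) * ‖m i - c'‖^2
              + ((δ i ^ 2 + (1 + ε / 3) ^ 2 - 1) / (2 * (1 + ε / 3) ^ 2)) * ‖p (i+1) - c'‖^2
              - (((δ i ^ 2 + (1 + ε / 3) ^ 2 - 1) / (2 * (1 + ε / 3) ^ 2))
                  * (1 - (δ i ^ 2 + (1 + ε / 3) ^ 2 - 1) / (2 * (1 + ε / 3) ^ 2)))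
                * ‖p (i+1) - m i‖^2 := by
          rw [hsum, hA, hinner]; ring
        have hA2 : ‖m i - c'‖^2 ≤ δ i ^ 2 * R^2 := by
          have h1 := pow_le_pow_left₀ (norm_nonneg (m i - c')) hmd 2
          calc ‖m i - c'‖^2 ≤ (δ i * R)^2 := h1
            _ = δ i ^2 * R^2 := by ring
        have hB2 : ‖p (i+1) - c'‖^2 ≤ R^2 := by
          have h1 := pow_le_pow_left₀ (norm_nonneg (p (i+1) - c')) hpc 2
          simpa using h1
        have hW2 : (1 + ε/3)^2 * R^2 ≤ ‖p (i+1) - m i‖^2 := by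
          have h1 := pow_le_pow_left₀ (by positivity : (0:ℝ) ≤ (1 + ε/3) * R) hdlb 2
          calc (1 + ε/3)^2 * R^2 = ((1 + ε/3) * R)^2 := by ring
            _ ≤ ‖p (i+1) - m i‖^2 := h1
        have hQid : (1 - (δ i ^ 2 + (1 + ε / 3) ^ 2 - 1) / (2 * (1 + ε / 3) ^ 2)) * (δ i ^2 * R^2)
              + ((δ i ^ 2 + (1 + ε / 3) ^ 2 - 1) / (2 * (1 + ε / 3) ^ 2)) * R^2
              - (((δ i ^ 2 + (1 + ε / 3) ^ 2 - 1) / (2 * (1 + ε / 3) ^ 2))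
                  * (1 - (δ i ^ 2 + (1 + ε / 3) ^ 2 - 1) / (2 * (1 + ε / 3) ^ 2)))
                * ((1 + ε/3)^2 * R^2)
            = (1 - ((1 + (1 + ε / 3) ^ 2 - δ i ^ 2) / (2 * (1 + ε / 3))) ^ 2) * R^2 := by
          have hαne : (1 + ε / 3 : ℝ) ≠ 0 := ne_of_gt hα0
          field_simp
          ring
        have hnormsq : ‖m (i+1) - c'‖^2
            ≤ (1 - ((1 + (1 + ε / 3) ^ 2 - δ i ^ 2) / (2 * (1 + ε / 3))) ^ 2) * R^2 := by
          rw [hstep, ← hQid]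
          have t1 := mul_le_mul_of_nonneg_left hA2
            (by linarith : (0:ℝ) ≤ 1 - (δ i ^ 2 + (1 + ε / 3) ^ 2 - 1) / (2 * (1 + ε / 3) ^ 2))
          have t2 := mul_le_mul_of_nonneg_left hB2 hlam0
          have t3 := mul_le_mul_of_nonneg_left hW2 (mul_nonneg hlam0
            (by linarith : (0:ℝ) ≤ 1 - (δ i ^ 2 + (1 + ε / 3) ^ 2 - 1) / (2 * (1 + ε / 3) ^ 2)))
          linarith [t1, t2, t3]
        have hnorm : ‖m (i+1) - c'‖ ≤ δ (i+1) * R := by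
          have h2 : ‖m (i+1) - c'‖^2 ≤ (δ (i+1) * R)^2 := by
            rw [mul_pow, hδsq]; linarith [hnormsq]
          have h3 := Real.sqrt_le_sqrt h2
          rwa [Real.sqrt_sq (norm_nonneg _), Real.sqrt_sq (mul_nonneg hδ0' hR0)] at h3
        refine ⟨hδ0', hδ1', hnorm, ?_⟩
        have hn1 : (1:ℝ) ≤ (i:ℝ) := by exact_mod_cast hi1
        have hL4 := meb_L4 ε (i:ℝ) (δ i) hε0 hε1 hn1 hinv
        have h1mQ : 1 - δ (i+1)^2
            = ((1 + (1 + ε / 3) ^ 2 - δ i ^ 2) / (2 * (1 + ε / 3))) ^ 2 := by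
          rw [hδsq]; ring
        push_cast
        rw [show ((i:ℝ) + 1 - 1) = (i:ℝ) by ring, show ((i:ℝ) + 1 + 1) = (i:ℝ) + 2 by ring,
          h1mQ]
        exact hL4
    -- final contradiction at i = T
    obtain ⟨hd0, hd1, hmd, hinv⟩ := key T hT1 le_rfl
    have hbad : (1 + ε) * R < r T := hcon T hT1 le_rfl
    rw [hr] at hbad
    have hpc : ‖p (T+1) - c'‖ ≤ R := hRle _ (hpP T hT1)
    have htri : ‖p (T+1) - m T‖ ≤ R + δ T * R := by
      calc ‖p (T+1) - m T‖ ≤ ‖p (T+1) - c'‖ + ‖m T - c'‖ := by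
            have e : p (T+1) - m T = (p (T+1) - c') - (m T - c') := by abel
            rw [e]; exact norm_sub_le _ _
        _ ≤ R + δ T * R := add_le_add hpc hmd
    obtain ⟨hDT, -, -⟩ := meb_L1 ε R (‖p (T+1) - m T‖) (δ T) hε0 hε1 hRpos hbad htri
    exact meb_L5 ε (T:ℝ) (δ T) hε0 hε1 hT6 hTu hDT hinv
end

section
/- In the Modified MEB setup, let c' ∈ ℝ^D and set ρ = max_{x∈P} ‖x − c'‖, with ρ > 0. Let j ≥ 1 be an integer, and suppose that for every 1 ≤ i ≤ j one has ‖p_{i+1} − m_i‖ > (1 + ε/3)·ρ. Then ‖m_{j+1} − c'‖ ≤ δ_{j+1}·ρ and δ_{j+1} < δ_j. -/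
set_option maxHeartbeats 1000000


/-- the Corollary in the appendix of the paper: while Case (2)
keeps occurring, `m_j` stays within `δ_j · ρ` of the center, and `δ` decreases. -/
theorem stmt_12 (D : ℕ) (hD : 1 ≤ D)
    (P : Finset (EuclideanSpace ℝ (Fin D))) (hP : P.Nonempty)
    (ε : ℝ) (hε0 : 0 < ε) (hε1 : ε ≤ 1)
    (p m : ℕ → EuclideanSpace ℝ (Fin D)) (δ : ℕ → ℝ)
    (hp1 : p 1 ∈ P) (hm1 : m 1 = p 1) (hδ1 : δ 1 = 1)
    (hpP : ∀ i, 1 ≤ i → p (i + 1) ∈ P)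
    (hafn : ∀ i, 1 ≤ i → ∀ x ∈ P, ‖x - m i‖ ≤ (1 + ε / 3) * ‖p (i + 1) - m i‖)
    (hm : ∀ i, 1 ≤ i → m (i + 1) = m i +
      ((δ i ^ 2 + (1 + ε / 3) ^ 2 - 1) / (2 * (1 + ε / 3) ^ 2)) • (p (i + 1) - m i))
    (hδ : ∀ i, 1 ≤ i → δ (i + 1) =
      Real.sqrt (1 - ((1 + (1 + ε / 3) ^ 2 - δ i ^ 2) / (2 * (1 + ε / 3))) ^ 2))
    (c' : EuclideanSpace ℝ (Fin D)) (ρ : ℝ)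
    (hρ : ρ = P.sup' hP (fun x => ‖x - c'‖)) (hρpos : 0 < ρ)
    (j : ℕ) (hj : 1 ≤ j)
    (hcase2 : ∀ i, 1 ≤ i → i ≤ j → (1 + ε / 3) * ρ < ‖p (i + 1) - m i‖) :
    ‖m (j + 1) - c'‖ ≤ δ (j + 1) * ρ ∧ δ (j + 1) < δ j := by
  set t : ℝ := 1 + ε / 3 with ht_def
  have ht1 : 1 < t := by simp only [ht_def]; linarith
  have ht0 : 0 < t := by linarith
  -- the main step
  have step : ∀ i, 1 ≤ i → i ≤ j →
      (0 ≤ δ i ∧ δ i ≤ 1 ∧ ‖m i - c'‖ ≤ δ i * ρ) →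
      ((0 ≤ δ (i + 1) ∧ δ (i + 1) ≤ 1 ∧ ‖m (i + 1) - c'‖ ≤ δ (i + 1) * ρ) ∧
        0 ≤ 1 - ((1 + t ^ 2 - δ i ^ 2) / (2 * t)) ^ 2) := by
    intro i hi1 hij ⟨hd0, hd1, hdist⟩
    set a : EuclideanSpace ℝ (Fin D) := m i - c' with ha_def
    set u : EuclideanSpace ℝ (Fin D) := p (i + 1) - m i with hu_def
    set lam : ℝ := (δ i ^ 2 + t ^ 2 - 1) / (2 * t ^ 2) with hlam_def
    have hmrec : m (i + 1) - c' = a + lam • u := by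
      rw [hm i hi1, ha_def, hu_def, hlam_def]; abel
    have expand : ‖a + lam • u‖ ^ 2 = ‖a‖ ^ 2 + 2 * lam * inner ℝ a u + lam ^ 2 * ‖u‖ ^ 2 := by
      rw [norm_add_sq_real, real_inner_smul_right, norm_smul, mul_pow, Real.norm_eq_abs, sq_abs]
      ring
    have hpρ : ‖p (i + 1) - c'‖ ≤ ρ := by
      rw [hρ]; exact Finset.le_sup' (fun x => ‖x - c'‖) (hpP i hi1)
    have hau : a + u = p (i + 1) - c' := by rw [ha_def, hu_def]; abel
    have hip : ‖a‖ ^ 2 + 2 * inner ℝ a u + ‖u‖ ^ 2 ≤ ρ ^ 2 := by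
      rw [← norm_add_sq_real, hau]
      exact pow_le_pow_left₀ (norm_nonneg _) hpρ 2
    have hu1 : t * ρ < ‖u‖ := hcase2 i hi1 hij
    have hu2 : t ^ 2 * ρ ^ 2 ≤ ‖u‖ ^ 2 := by nlinarith [mul_pos ht0 hρpos]
    have ha2 : ‖a‖ ^ 2 ≤ δ i ^ 2 * ρ ^ 2 := by
      have := pow_le_pow_left₀ (norm_nonneg a) hdist 2
      calc ‖a‖ ^ 2 ≤ (δ i * ρ) ^ 2 := this
        _ = δ i ^ 2 * ρ ^ 2 := by ring
    have hs1 : δ i ^ 2 ≤ 1 := by nlinarith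
    have hs0 : 0 ≤ δ i ^ 2 := sq_nonneg _
    have hlam0 : 0 ≤ lam := by
      rw [hlam_def]
      apply div_nonneg (by nlinarith) (by positivity)
    have hlam1 : lam ≤ 1 := by
      rw [hlam_def, div_le_one (by positivity)]
      nlinarith
    have hgap : 0 ≤ ρ ^ 2 - ‖a‖ ^ 2 - ‖u‖ ^ 2 - 2 * inner ℝ a u := by linarith
    have main : ‖m (i + 1) - c'‖ ^ 2 ≤ (1 - ((1 + t ^ 2 - δ i ^ 2) / (2 * t)) ^ 2) * ρ ^ 2 := by
      rw [hmrec, expand]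
      have step1 : ‖a‖ ^ 2 + 2 * lam * inner ℝ a u + lam ^ 2 * ‖u‖ ^ 2 ≤
          (1 - lam) * ‖a‖ ^ 2 + lam * ρ ^ 2 + lam * (lam - 1) * ‖u‖ ^ 2 := by
        nlinarith [mul_nonneg hlam0 hgap]
      have step2 : (1 - lam) * ‖a‖ ^ 2 + lam * ρ ^ 2 + lam * (lam - 1) * ‖u‖ ^ 2 ≤
          (1 - lam) * (δ i ^ 2 * ρ ^ 2) + lam * ρ ^ 2 + lam * (lam - 1) * (t ^ 2 * ρ ^ 2) := by
        nlinarith [mul_nonneg (sub_nonneg.2 hlam1) (sub_nonneg.2 ha2),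
          mul_nonneg (mul_nonneg hlam0 (sub_nonneg.2 hlam1)) (sub_nonneg.2 hu2)]
      have step3 : (1 - lam) * (δ i ^ 2 * ρ ^ 2) + lam * ρ ^ 2 + lam * (lam - 1) * (t ^ 2 * ρ ^ 2)
          = (1 - ((1 + t ^ 2 - δ i ^ 2) / (2 * t)) ^ 2) * ρ ^ 2 := by
        rw [hlam_def]
        field_simp
        ring
      exact le_trans step1 (le_trans step2 step3.le)
    have hX : 0 ≤ 1 - ((1 + t ^ 2 - δ i ^ 2) / (2 * t)) ^ 2 := by
      by_contra h
      push_neg at h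
      have hneg : (1 - ((1 + t ^ 2 - δ i ^ 2) / (2 * t)) ^ 2) * ρ ^ 2 < 0 :=
        mul_neg_of_neg_of_pos (by linarith) (by positivity)
      nlinarith [sq_nonneg ‖m (i + 1) - c'‖]
    have hδsucc : δ (i + 1) = Real.sqrt (1 - ((1 + t ^ 2 - δ i ^ 2) / (2 * t)) ^ 2) := hδ i hi1
    refine ⟨⟨by rw [hδsucc]; exact Real.sqrt_nonneg _, ?_, ?_⟩, hX⟩
    · rw [hδsucc]
      rw [Real.sqrt_le_one]
      nlinarith [sq_nonneg ((1 + t ^ 2 - δ i ^ 2) / (2 * t))]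
    · have h1 : ‖m (i + 1) - c'‖ = Real.sqrt (‖m (i + 1) - c'‖ ^ 2) :=
        (Real.sqrt_sq (norm_nonneg _)).symm
      rw [h1, hδsucc]
      calc Real.sqrt (‖m (i + 1) - c'‖ ^ 2)
          ≤ Real.sqrt ((1 - ((1 + t ^ 2 - δ i ^ 2) / (2 * t)) ^ 2) * ρ ^ 2) :=
            Real.sqrt_le_sqrt main
        _ = Real.sqrt (1 - ((1 + t ^ 2 - δ i ^ 2) / (2 * t)) ^ 2) * ρ := by
            rw [Real.sqrt_mul hX, Real.sqrt_sq hρpos.le]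
  -- invariant by induction
  have inv : ∀ i, 1 ≤ i → i ≤ j → (0 ≤ δ i ∧ δ i ≤ 1 ∧ ‖m i - c'‖ ≤ δ i * ρ) := by
    intro i
    induction i with
    | zero => intro h; omega
    | succ n ih =>
      intro _ hnj
      by_cases hn0 : n = 0
      · subst hn0
        refine ⟨by rw [hδ1]; norm_num, by rw [hδ1], ?_⟩
        rw [hδ1, hm1, one_mul, hρ]
        exact Finset.le_sup' (fun x => ‖x - c'‖) hp1
      · have hn1 : 1 ≤ n := by omega
        exact (step n hn1 (by omega) (ih hn1 (by omega))).1
  -- conclude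
  obtain ⟨hj0, hj1, hjdist⟩ := inv j hj le_rfl
  obtain ⟨⟨hd0, hd1, hdist⟩, hX⟩ := step j hj le_rfl ⟨hj0, hj1, hjdist⟩
  refine ⟨hdist, ?_⟩
  have hsq : δ (j + 1) ^ 2 = 1 - ((1 + t ^ 2 - δ j ^ 2) / (2 * t)) ^ 2 := by
    rw [hδ j hj]
    exact Real.sq_sqrt hX
  have hpos : 0 < t ^ 2 - (1 - δ j ^ 2) := by nlinarith [sq_nonneg (δ j)]
  have hlt : δ (j + 1) ^ 2 < δ j ^ 2 := by
    rw [hsq, div_pow, sub_lt_iff_lt_add, ← sub_lt_iff_lt_add',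
      lt_div_iff₀ (by positivity : (0 : ℝ) < (2 * t) ^ 2)]
    nlinarith [mul_pos hpos hpos]
  exact lt_of_pow_lt_pow_left₀ 2 hj0 hlt
end

section
/- Let E be a real inner product space (e.g., ℝ^D with D ≥ 2), let c ∈ E, and let 0 < r' < r be real numbers. Let p, p' ∈ E with ‖p − c‖ = r and ‖p' − c‖ = r', and set l = ‖p − p'‖; assume l ≥ r. Let m be a point of the segment from p' to p satisfying ⟨m − c, p − p'⟩ = 0, and set l₁ = ‖p' − m‖ and l₂ = ‖p − m‖. Let p₁, p₂ ∈ E satisfy ‖p₁ − c‖ ≤ r', ‖p₂ − c‖ ≤ r, and ‖p₁ − p₂‖ > l, and let m* be a point on the segment from p₁ to p₂ with ‖m* − p₁‖ ≥ l₁ and ‖m* − p₂‖ ≥ l₂. Then ‖m* − c‖ ≤ ‖m − c‖. -/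
/-!
Write `d = ‖m - c‖`. Since `m` is the foot of the perpendicular from `c` to the line `p'p`,
Pythagoras gives `r'² = l₁² + d²` and `r² = l₂² + d²`. For `m* = s • p₁ + t • p₂` with
`s + t = 1`, expanding around `m*` gives
`‖m* - c‖² = s (‖p₁ - c‖² - ‖p₁ - m*‖²) + t (‖p₂ - c‖² - ‖p₂ - m*‖²)`,
and both brackets are at most `r'² - l₁² = d²` and `r² - l₂² = d²` respectively.
-/

open scoped RealInnerProductSpace

section

variable {E : Type*} [NormedAddCommGroup E] [InnerProductSpace ℝ E]

theorem norm_sub_sq_eq_of_inner_eq_zero_of_mem_affineSpan_pair {a b m c : E}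
    (hm : m ∈ line[ℝ, a, b]) (h : ⟪m - c, b - a⟫ = 0) :
    ‖a - c‖ ^ 2 = ‖a - m‖ ^ 2 + ‖m - c‖ ^ 2 := by
  obtain ⟨t, rfl⟩ := mem_affineSpan_pair_iff_exists_lineMap_eq.1 hm
  have hperp : ⟪a - AffineMap.lineMap a b t, AffineMap.lineMap a b t - c⟫ = 0 := by
    rw [show a - AffineMap.lineMap a b t = (-t) • (b - a) by
        rw [AffineMap.lineMap_apply_module]; module,
      real_inner_smul_left, real_inner_comm, h, mul_zero]
  rw [← sub_add_sub_cancel a (AffineMap.lineMap a b t) c, norm_add_sq_real, hperp]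
  ring

theorem norm_sub_sq_eq_of_eq_smul_add_smul {a b c x : E} {s t : ℝ} (hst : s + t = 1)
    (hx : s • a + t • b = x) :
    ‖x - c‖ ^ 2 = s * (‖a - c‖ ^ 2 - ‖a - x‖ ^ 2) + t * (‖b - c‖ ^ 2 - ‖b - x‖ ^ 2) := by
  have hbal : s • (a - x) + t • (b - x) = 0 := by
    rw [show s • (a - x) + t • (b - x) = s • a + t • b - (s + t) • x by module, hst, one_smul,
      hx, sub_self]
  have hsplit (y : E) : ‖y - c‖ ^ 2 - ‖y - x‖ ^ 2 = ‖x - c‖ ^ 2 + 2 * ⟪y - x, x - c⟫ := by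
    rw [← sub_add_sub_cancel y x c, norm_add_sq_real]; ring
  have hcross : s * ⟪a - x, x - c⟫ + t * ⟪b - x, x - c⟫ = 0 := by
    rw [← real_inner_smul_left, ← real_inner_smul_left, ← inner_add_left, hbal, inner_zero_left]
  rw [hsplit, hsplit]
  linear_combination (-1 : ℝ) * ‖x - c‖ ^ 2 * hst - 2 * hcross

theorem norm_sub_le_of_mem_segment_of_norm_sq_le {a b c x : E} {d : ℝ} (hd : 0 ≤ d)
    (hx : x ∈ segment ℝ a b) (ha : ‖a - c‖ ^ 2 ≤ ‖a - x‖ ^ 2 + d ^ 2)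
    (hb : ‖b - c‖ ^ 2 ≤ ‖b - x‖ ^ 2 + d ^ 2) :
    ‖x - c‖ ≤ d := by
  obtain ⟨s, t, hs, ht, hst, hx⟩ := hx
  refine pow_le_pow_iff_left₀ (norm_nonneg _) hd two_ne_zero |>.1 ?_
  calc ‖x - c‖ ^ 2
      = s * (‖a - c‖ ^ 2 - ‖a - x‖ ^ 2) + t * (‖b - c‖ ^ 2 - ‖b - x‖ ^ 2) :=
        norm_sub_sq_eq_of_eq_smul_add_smul hst hx
    _ ≤ s * d ^ 2 + t * d ^ 2 := by gcongr <;> linarith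
    _ = d ^ 2 := by rw [← add_mul, hst, one_mul]

end

theorem stmt_13_general {E : Type*} [NormedAddCommGroup E] [InnerProductSpace ℝ E]
    (c p p' m p₁ p₂ mstar : E) (r r' l₁ l₂ : ℝ)
    (hp : ‖p - c‖ = r) (hp' : ‖p' - c‖ = r')
    (hmseg : m ∈ segment ℝ p' p)
    (htan : ⟪m - c, p - p'⟫ = 0)
    (hl₁ : l₁ = ‖p' - m‖) (hl₂ : l₂ = ‖p - m‖)
    (hp₁ : ‖p₁ - c‖ ≤ r') (hp₂ : ‖p₂ - c‖ ≤ r)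
    (hmstarseg : mstar ∈ segment ℝ p₁ p₂)
    (hm1 : l₁ ≤ ‖mstar - p₁‖) (hm2 : l₂ ≤ ‖mstar - p₂‖) :
    ‖mstar - c‖ ≤ ‖m - c‖ := by
  subst hl₁ hl₂
  have hr' : r' ^ 2 = ‖p' - m‖ ^ 2 + ‖m - c‖ ^ 2 := by
    rw [← hp']
    exact norm_sub_sq_eq_of_inner_eq_zero_of_mem_affineSpan_pair
      (mem_segment_iff_wbtw.1 hmseg).mem_affineSpan htan
  have hr : r ^ 2 = ‖p - m‖ ^ 2 + ‖m - c‖ ^ 2 := by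
    rw [← hp]
    refine norm_sub_sq_eq_of_inner_eq_zero_of_mem_affineSpan_pair
      (mem_segment_iff_wbtw.1 hmseg).symm.mem_affineSpan ?_
    rw [← neg_sub p, inner_neg_right, htan, neg_zero]
  refine norm_sub_le_of_mem_segment_of_norm_sq_le (norm_nonneg _) hmstarseg ?_ ?_
  · calc ‖p₁ - c‖ ^ 2 ≤ r' ^ 2 := by gcongr
      _ = ‖p' - m‖ ^ 2 + ‖m - c‖ ^ 2 := hr'
      _ ≤ ‖p₁ - mstar‖ ^ 2 + ‖m - c‖ ^ 2 := by rw [norm_sub_rev p₁]; gcongr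
  · calc ‖p₂ - c‖ ^ 2 ≤ r ^ 2 := by gcongr
      _ = ‖p - m‖ ^ 2 + ‖m - c‖ ^ 2 := hr
      _ ≤ ‖p₂ - mstar‖ ^ 2 + ‖m - c‖ ^ 2 := by rw [norm_sub_rev p₂]; gcongr

/-- the geometric observation of Kim and Schwarzwald
(Lemma 8 of the paper). -/
theorem stmt_13 {E : Type*} [NormedAddCommGroup E] [InnerProductSpace ℝ E]
    (c p p' m p₁ p₂ mstar : E) (r r' l l₁ l₂ : ℝ)
    (hr' : 0 < r') (hr'r : r' < r)
    (hp : ‖p - c‖ = r) (hp' : ‖p' - c‖ = r')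
    (hl : l = ‖p - p'‖) (hlr : r ≤ l)
    (hmseg : m ∈ segment ℝ p' p)
    (htan : ⟪m - c, p - p'⟫ = 0)
    (hl₁ : l₁ = ‖p' - m‖) (hl₂ : l₂ = ‖p - m‖)
    (hp₁ : ‖p₁ - c‖ ≤ r') (hp₂ : ‖p₂ - c‖ ≤ r)
    (hp₁p₂ : l < ‖p₁ - p₂‖)
    (hmstarseg : mstar ∈ segment ℝ p₁ p₂)
    (hm1 : l₁ ≤ ‖mstar - p₁‖) (hm2 : l₂ ≤ ‖mstar - p₂‖) :
    ‖mstar - c‖ ≤ ‖m - c‖ :=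
  stmt_13_general c p p' m p₁ p₂ mstar r r' l₁ l₂ hp hp' hmseg htan hl₁ hl₂ hp₁ hp₂ hmstarseg hm1
    hm2
end

section
/- Let β : ℕ → ℝ satisfy β(1) = 1/2 and β(i+1) = (1 + β(i)²)/2 for every i ≥ 1. Then for every integer i ≥ 1, β(i) ≥ 1 − 2/(3 + i). -/
/-- the recursion `β₁ = 1/2`, `β_{i+1} = (1 + β_i²)/2` satisfies
`β_i ≥ 1 − 2/(3+i)`. -/
theorem stmt_14 (β : ℕ → ℝ) (h1 : β 1 = 1 / 2)
    (hrec : ∀ i, 1 ≤ i → β (i + 1) = (1 + β i ^ 2) / 2) :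
    ∀ i : ℕ, 1 ≤ i → β i ≥ 1 - 2 / (3 + (i : ℝ)) := by
  intro i hi
  induction i with
  | zero => omega
  | succ n ih =>
    rcases Nat.eq_or_lt_of_le hi with h | h
    · simp [← h, h1]; norm_num
    · have hn : 1 ≤ n := by omega
      have ihb := ih hn
      have ht : (0:ℝ) < 3 + (n:ℝ) := by positivity
      have hb0 : (0:ℝ) ≤ 1 - 2 / (3 + (n:ℝ)) := by
        rw [sub_nonneg, div_le_one ht]
        have : (1:ℝ) ≤ (n:ℝ) := by exact_mod_cast hn
        linarith
      have hsq : β n ^ 2 ≥ (1 - 2 / (3 + (n:ℝ))) ^ 2 := by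
        apply pow_le_pow_left₀ hb0 ihb
      rw [hrec n hn]
      have ht1 : (0:ℝ) < 3 + ((n:ℝ) + 1) := by positivity
      have key : (1 + (1 - 2 / (3 + (n:ℝ))) ^ 2) / 2 ≥ 1 - 2 / (3 + ((n:ℝ) + 1)) := by
        rw [ge_iff_le, ← sub_nonneg]
        have e1 : (3 + (n:ℝ)) ≠ 0 := ne_of_gt ht
        have e2 : (3 + ((n:ℝ) + 1)) ≠ 0 := ne_of_gt ht1
        field_simp
        nlinarith [sq_nonneg ((n:ℝ)), Nat.cast_nonneg (α := ℝ) n]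
      push_cast
      linarith
end
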